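/- arXiv:1411.7498 — 3 statements merged into one kernel-verified Lean document; each statement's English description precedes it below -/
import Mathlib

section
/- For all u, w in the Coxeter group W, the element σ(u) left-divides σ(w) in the Artin–Tits monoid M if and only if u ≤ w in the right weak order on W; and σ(u) right-divides σ(w) in M if and only if u is a suffix of w. -/
section ArtinDefs

variable {S : Type*}

/-- The alternating word `sts⋯` with `k` factors, in the free monoid on `S`. -/
def altWord (s t : S) : ℕ → FreeMonoid S
  | 0 => 1
  | n + 1 => FreeMonoid.of s * altWord t s n

/-- Braid relations determined by a Coxeter matrix: for `s ≠ t` with `m s t` finite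
(recall that in `CoxeterMatrix`, the entry `0` encodes `∞`), the two alternating words
with `m s t` factors are related. -/
def braidRel (Mmat : CoxeterMatrix S) : FreeMonoid S → FreeMonoid S → Prop :=
  fun a b => ∃ s t : S, s ≠ t ∧ Mmat s t ≠ 0 ∧
    a = altWord s t (Mmat s t) ∧ b = altWord t s (Mmat s t)

/-- The Artin–Tits monoid associated with a Coxeter matrix: the monoid presented by
generators `S` and the braid relations. -/
abbrev ArtinTitsMonoid (Mmat : CoxeterMatrix S) : Type _ :=
  (conGen (braidRel Mmat)).Quotient

/-- The images of the generators in the Artin–Tits monoid. -/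
def atGen (Mmat : CoxeterMatrix S) (s : S) : ArtinTitsMonoid Mmat :=
  (Con.mk' (conGen (braidRel Mmat))) (FreeMonoid.of s)

/-- `f` right-divides `g`.  (Note: `f ∣ g` is left-divisibility, `∃ h, g = f * h`.) -/
def MonRightDvd {M : Type*} [Monoid M] (f g : M) : Prop := ∃ h, g = h * f

/-- `h` is a right-lcm of `f` and `g`: a least common right-multiple with respect to
left-divisibility. -/
def IsRightLcm {M : Type*} [Monoid M] (f g h : M) : Prop :=
  f ∣ h ∧ g ∣ h ∧ ∀ k, f ∣ k → g ∣ k → h ∣ k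

/-- An atom of a monoid: an element `g ≠ 1` whose only left-divisors are `1` and `g`. -/
def IsAtomElem {M : Type*} [Monoid M] (g : M) : Prop :=
  g ≠ 1 ∧ ∀ f, f ∣ g → f = 1 ∨ f = g

/-- `F` is closed under right-lcm: the right-lcm of two elements of `F` belongs to `F`
when it exists. -/
def ClosedRightLcm {M : Type*} [Monoid M] (F : Set M) : Prop :=
  ∀ f ∈ F, ∀ g ∈ F, ∀ h, IsRightLcm f g h → h ∈ F

/-- `F` is closed under right-divisor. -/
def ClosedRightDvd {M : Type*} [Monoid M] (F : Set M) : Prop :=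
  ∀ g ∈ F, ∀ f, MonRightDvd f g → f ∈ F

/-- The closure of a subset of a monoid under right-lcm and right-divisor:
the smallest family containing `base` and closed under right-lcm (when it exists)
and under right-divisor. -/
inductive LcmDvdClosure {M : Type*} [Monoid M] (base : Set M) : M → Prop
  | base {g : M} : g ∈ base → LcmDvdClosure base g
  | lcm {f g h : M} : LcmDvdClosure base f → LcmDvdClosure base g →
      IsRightLcm f g h → LcmDvdClosure base h
  | rdvd {f g : M} : LcmDvdClosure base g → MonRightDvd f g → LcmDvdClosure base f

/-- A Garside family in a monoid `M`: a set `F` containing `1` such that every element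
of `M` admits an `F`-normal decomposition. -/
def IsGarsideFamily {M : Type*} [Monoid M] (F : Set M) : Prop :=
  (1 : M) ∈ F ∧ ∀ g : M, ∃ l : List M, (∀ x ∈ l, x ∈ F) ∧ l.prod = g ∧
    ∀ i : ℕ, i + 1 < l.length → ∀ s ∈ F, ∀ f : M,
      s ∣ f * l.getD i 1 * l.getD (i + 1) 1 → s ∣ f * l.getD i 1

end ArtinDefs

section CoxeterDefs

variable {S : Type*} {W : Type*} [Group W]

/-- The right weak order on `W`: `u ≤ w` iff `w = u * v` with `ℓ(w) = ℓ(u) + ℓ(v)`. -/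
def WeakLE {Mmat : CoxeterMatrix S} (cs : CoxeterSystem Mmat W) (u w : W) : Prop :=
  ∃ v : W, w = u * v ∧ cs.length w = cs.length u + cs.length v

/-- `u` is a suffix of `w`: `w = v * u` with `ℓ(w) = ℓ(v) + ℓ(u)`. -/
def IsSuffixOf {Mmat : CoxeterMatrix S} (cs : CoxeterSystem Mmat W) (u w : W) : Prop :=
  ∃ v : W, w = v * u ∧ cs.length w = cs.length v + cs.length u

/-- `j` is the join (least upper bound) of `u` and `v` in the right weak order. -/
def IsJoin {Mmat : CoxeterMatrix S} (cs : CoxeterSystem Mmat W) (u v j : W) : Prop :=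
  WeakLE cs u j ∧ WeakLE cs v j ∧ ∀ k : W, WeakLE cs u k → WeakLE cs v k → WeakLE cs j k

end CoxeterDefs

/-! Braid relations preserve the number of letters and hold in `W`, so the Artin–Tits monoid
carries a letter-count homomorphism and a projection `π` onto `W`, with `ℓ(π m)` at most the
letter count of `m`. The lift `σ w` of a reduced word has letter count exactly `ℓ(w)`; hence any
factorisation `σ w = a * b` projects to a length-additive factorisation `w = π a * π b`.
Conversely, concatenating reduced words of the factors of a length-additive product `w = u * v`
gives a reduced word for `w`, so `σ w = σ u * σ v`. -/

open CoxeterSystem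

theorem altWord_toList {S : Type*} (s t : S) (m : ℕ) :
    (altWord s t m).toList = (alternatingWord t s m).reverse := by
  induction m generalizing s t with
  | zero => rfl
  | succ n ih => simp [altWord, alternatingWord_succ, ih]

namespace ArtinTitsMonoid

variable {S : Type*} {W : Type*} [Group W] {Mmat : CoxeterMatrix S}

variable (Mmat) in
def letterCount : ArtinTitsMonoid Mmat →* Multiplicative ℕ :=
  Con.lift _ (FreeMonoid.lift fun _ => Multiplicative.ofAdd 1) <| Con.conGen_le.2 <| by
    rintro _ _ ⟨s, t, -, -, rfl, rfl⟩
    simp [Con.ker_rel, FreeMonoid.lift_apply, altWord_toList]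

def toCoxeterGroup (cs : CoxeterSystem Mmat W) : ArtinTitsMonoid Mmat →* W :=
  Con.lift _ (FreeMonoid.lift cs.simple) <| Con.conGen_le.2 <| by
    rintro _ _ ⟨s, t, -, -, rfl, rfl⟩
    have h : cs.wordProd (alternatingWord t s (Mmat s t)) =
        cs.wordProd (alternatingWord s t (Mmat s t)) := by
      simpa only [braidWord, Mmat.symmetric t s] using cs.wordProd_braidWord_eq t s
    simp only [Con.ker_rel, FreeMonoid.lift_apply, altWord_toList]
    change cs.wordProd _ = cs.wordProd _
    rw [wordProd_reverse, wordProd_reverse, h]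

theorem letterCount_prod_map_atGen (ω : List S) :
    letterCount Mmat (ω.map (atGen Mmat)).prod = Multiplicative.ofAdd ω.length := by
  induction ω with
  | nil => rfl
  | cons s ω ih =>
    rw [List.map_cons, List.prod_cons, map_mul, ih, List.length_cons, add_comm, ofAdd_add]
    rfl

theorem toCoxeterGroup_prod_map_atGen (cs : CoxeterSystem Mmat W) (ω : List S) :
    toCoxeterGroup cs (ω.map (atGen Mmat)).prod = cs.wordProd ω := by
  rw [map_list_prod, List.map_map, wordProd]
  rfl

theorem prod_map_atGen (ω : List S) :
    (ω.map (atGen Mmat)).prod = Con.mk' _ (FreeMonoid.ofList ω) := by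
  induction ω with
  | nil => rfl
  | cons s ω ih => rw [List.map_cons, List.prod_cons, ih, FreeMonoid.ofList_cons, map_mul]; rfl

theorem exists_prod_map_atGen_eq (m : ArtinTitsMonoid Mmat) :
    ∃ ω : List S, (ω.map (atGen Mmat)).prod = m := by
  induction m using Con.induction_on with
  | H x => exact ⟨x.toList, prod_map_atGen _⟩

theorem length_toCoxeterGroup_le (cs : CoxeterSystem Mmat W) (m : ArtinTitsMonoid Mmat) :
    cs.length (toCoxeterGroup cs m) ≤ (letterCount Mmat m).toAdd := by
  obtain ⟨ω, rfl⟩ := exists_prod_map_atGen_eq m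
  rw [toCoxeterGroup_prod_map_atGen, letterCount_prod_map_atGen, toAdd_ofAdd]
  exact cs.length_wordProd_le ω

end ArtinTitsMonoid

open ArtinTitsMonoid

section ReducedWordSection

variable {S : Type*} {W : Type*} [Group W] {Mmat : CoxeterMatrix S}

def IsReducedWordSection (cs : CoxeterSystem Mmat W) (σ : W → ArtinTitsMonoid Mmat) : Prop :=
  ∀ (w : W) (ω : List S), cs.IsReduced ω → cs.wordProd ω = w → σ w = (ω.map (atGen Mmat)).prod

namespace IsReducedWordSection

variable {cs : CoxeterSystem Mmat W} {σ : W → ArtinTitsMonoid Mmat}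

theorem toCoxeterGroup_apply (hσ : IsReducedWordSection cs σ) (w : W) :
    toCoxeterGroup cs (σ w) = w := by
  obtain ⟨ω, hω, rfl⟩ := cs.exists_isReduced w
  rw [hσ _ ω hω rfl, toCoxeterGroup_prod_map_atGen]

theorem letterCount_apply (hσ : IsReducedWordSection cs σ) (w : W) :
    (letterCount Mmat (σ w)).toAdd = cs.length w := by
  obtain ⟨ω, hω, rfl⟩ := cs.exists_isReduced w
  rw [hσ _ ω hω rfl, letterCount_prod_map_atGen, toAdd_ofAdd, hω.eq]

theorem length_eq_of_eq_mul (hσ : IsReducedWordSection cs σ) {w : W}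
    {a b : ArtinTitsMonoid Mmat} (h : σ w = a * b) :
    cs.length w = cs.length (toCoxeterGroup cs a) + cs.length (toCoxeterGroup cs b) := by
  have hletters : cs.length w = (letterCount Mmat a).toAdd + (letterCount Mmat b).toAdd := by
    rw [← hσ.letterCount_apply, h, map_mul, toAdd_mul]
  have hw : w = toCoxeterGroup cs a * toCoxeterGroup cs b := by
    rw [← hσ.toCoxeterGroup_apply w, h, map_mul]
  have ha := length_toCoxeterGroup_le cs a
  have hb := length_toCoxeterGroup_le cs b
  have hsub := cs.length_mul_le (toCoxeterGroup cs a) (toCoxeterGroup cs b)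
  rw [← hw] at hsub
  omega

theorem map_mul_of_length_eq_add (hσ : IsReducedWordSection cs σ) {u v : W}
    (h : cs.length (u * v) = cs.length u + cs.length v) : σ (u * v) = σ u * σ v := by
  obtain ⟨ωu, hωu, rfl⟩ := cs.exists_isReduced u
  obtain ⟨ωv, hωv, rfl⟩ := cs.exists_isReduced v
  have hred : cs.IsReduced (ωu ++ ωv) := by
    rw [CoxeterSystem.IsReduced, wordProd_append, h, hωu.eq, hωv.eq, List.length_append]
  rw [hσ _ ωu hωu rfl, hσ _ ωv hωv rfl, hσ _ _ hred (wordProd_append ..), List.map_append,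
    List.prod_append]

theorem weakLE_of_dvd (hσ : IsReducedWordSection cs σ) {u w : W} (h : σ u ∣ σ w) :
    WeakLE cs u w := by
  obtain ⟨m, hm⟩ := h
  refine ⟨toCoxeterGroup cs m, ?_, ?_⟩
  · rw [← hσ.toCoxeterGroup_apply w, hm, map_mul, hσ.toCoxeterGroup_apply]
  · rw [hσ.length_eq_of_eq_mul hm, hσ.toCoxeterGroup_apply]

theorem isSuffixOf_of_rightDvd (hσ : IsReducedWordSection cs σ) {u w : W}
    (h : MonRightDvd (σ u) (σ w)) : IsSuffixOf cs u w := by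
  obtain ⟨m, hm⟩ := h
  refine ⟨toCoxeterGroup cs m, ?_, ?_⟩
  · rw [← hσ.toCoxeterGroup_apply w, hm, map_mul, hσ.toCoxeterGroup_apply]
  · rw [hσ.length_eq_of_eq_mul hm, hσ.toCoxeterGroup_apply]

theorem dvd_of_weakLE (hσ : IsReducedWordSection cs σ) {u w : W} (h : WeakLE cs u w) :
    σ u ∣ σ w := by
  obtain ⟨v, rfl, hlen⟩ := h
  exact ⟨σ v, hσ.map_mul_of_length_eq_add hlen⟩

theorem rightDvd_of_isSuffixOf (hσ : IsReducedWordSection cs σ) {u w : W}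
    (h : IsSuffixOf cs u w) : MonRightDvd (σ u) (σ w) := by
  obtain ⟨v, rfl, hlen⟩ := h
  exact ⟨σ v, hσ.map_mul_of_length_eq_add hlen⟩

end IsReducedWordSection

end ReducedWordSection

theorem artinTits_section_dvd_iff_general {S : Type*}
    (Mmat : CoxeterMatrix S) {W : Type*} [Group W] (cs : CoxeterSystem Mmat W)
    (σ : W → ArtinTitsMonoid Mmat)
    (hσ : ∀ (w : W) (ω : List S), cs.IsReduced ω → cs.wordProd ω = w →
      σ w = (ω.map (atGen Mmat)).prod)
    (u w : W) :
    (σ u ∣ σ w ↔ WeakLE cs u w) ∧ (MonRightDvd (σ u) (σ w) ↔ IsSuffixOf cs u w) := by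
  have hσ' : IsReducedWordSection cs σ := hσ
  exact ⟨⟨hσ'.weakLE_of_dvd, hσ'.dvd_of_weakLE⟩,
    ⟨hσ'.isSuffixOf_of_rightDvd, hσ'.rightDvd_of_isSuffixOf⟩⟩

/-- **Lemma 3.1(ii).** For `u, w` in the Coxeter group `W`, the element `σ(u)`
left-divides `σ(w)` in the Artin–Tits monoid `M` if and only if `u ≤ w` in the right
weak order; and `σ(u)` right-divides `σ(w)` if and only if `u` is a suffix of `w`. -/
theorem artinTits_section_dvd_iff {S : Type*} [Fintype S]
    (Mmat : CoxeterMatrix S) {W : Type*} [Group W] (cs : CoxeterSystem Mmat W)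
    (σ : W → ArtinTitsMonoid Mmat)
    (hσ : ∀ (w : W) (ω : List S), cs.IsReduced ω → cs.wordProd ω = w →
      σ w = (ω.map (atGen Mmat)).prod)
    (u w : W) :
    (σ u ∣ σ w ↔ WeakLE cs u w) ∧ (MonRightDvd (σ u) (σ w) ↔ IsSuffixOf cs u w) :=
  artinTits_section_dvd_iff_general Mmat cs σ hσ u w
end

section
/- (i) Every simple root is small: Δ ⊆ Σ. (ii) For every positive root β ∈ Φ⁺ \ Δ there exists a simple root α ∈ Δ with B(α, β) > 0, equivalently ℓ(s_α s_β s_α) = ℓ(s_β) − 2; and for every such α, β is small if and only if s_α(β) is small and B(α, β) < 1. -/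
section RootSystemDefs

variable {S : Type*} {W : Type*} [Group W]

/-- The simple root `α_s` in the vector space `V = S → ℝ`. -/
def simpleRoot [DecidableEq S] (s : S) : S → ℝ := Pi.single s 1

/-- The symmetric bilinear form `B` on `V = S → ℝ` with `B(α_s, α_t) = -cos (π / m s t)`
(with the convention that `B(α_s, α_t) = -1` when `m s t = ∞`, which is encoded by
`Mmat s t = 0`). -/
noncomputable def bform [Fintype S] (Mmat : CoxeterMatrix S) (v u : S → ℝ) : ℝ :=
  ∑ s : S, ∑ t : S,
    v s * u t * (if Mmat s t = 0 then -1 else -Real.cos (Real.pi / (Mmat s t : ℝ)))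

/-- The conic closure of `X`: all nonnegative linear combinations of elements of `X`. -/
def coneOf {V : Type*} [AddCommMonoid V] [Module ℝ V] (X : Set V) : Set V :=
  {v | ∃ (n : ℕ) (c : Fin n → ℝ) (x : Fin n → V),
    (∀ i, 0 ≤ c i) ∧ (∀ i, x i ∈ X) ∧ v = ∑ i, c i • x i}

variable [Fintype S] [DecidableEq S] {Mmat : CoxeterMatrix S}

/-- The root system `Φ = W(Δ)`, for the representation `ρ` of `W` on `V = S → ℝ`. -/
def rootSet (ρ : W →* ((S → ℝ) ≃ₗ[ℝ] (S → ℝ))) : Set (S → ℝ) :=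
  {v | ∃ (w : W) (s : S), v = ρ w (simpleRoot s)}

/-- The positive roots `Φ⁺ = cone(Δ) ∩ Φ`. -/
def posRoots (ρ : W →* ((S → ℝ) ≃ₗ[ℝ] (S → ℝ))) : Set (S → ℝ) :=
  coneOf (Set.range (simpleRoot (S := S))) ∩ rootSet ρ

/-- The negative roots `Φ⁻ = -Φ⁺`. -/
def negRoots (ρ : W →* ((S → ℝ) ≃ₗ[ℝ] (S → ℝ))) : Set (S → ℝ) :=
  {v | -v ∈ posRoots ρ}

/-- Dominance order: `Dominates ρ a b` means `a ≼ b`, i.e. every `w ∈ W` sending `b` to a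
negative root also sends `a` to a negative root. -/
def Dominates (ρ : W →* ((S → ℝ) ≃ₗ[ℝ] (S → ℝ))) (a b : S → ℝ) : Prop :=
  ∀ w : W, ρ w b ∈ negRoots ρ → ρ w a ∈ negRoots ρ

/-- A small root: a positive root dominating no positive root other than itself. -/
def IsSmallRoot (ρ : W →* ((S → ℝ) ≃ₗ[ℝ] (S → ℝ))) (b : S → ℝ) : Prop :=
  b ∈ posRoots ρ ∧ ∀ a ∈ posRoots ρ, Dominates ρ a b → a = b

/-- `t : W` is the reflection `s_b` in the root `b`: it acts on `V` by
`v ↦ v - 2 B(b, v) b`. -/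
def IsReflIn (Mmat : CoxeterMatrix S) (ρ : W →* ((S → ℝ) ≃ₗ[ℝ] (S → ℝ)))
    (t : W) (b : S → ℝ) : Prop :=
  ∀ v : S → ℝ, ρ t v = v - (2 * bform Mmat b v) • b

/-- The (left) inversion set `N(w) = Φ⁺ ∩ w(Φ⁻)`. -/
def invSet (ρ : W →* ((S → ℝ) ≃ₗ[ℝ] (S → ℝ))) (w : W) : Set (S → ℝ) :=
  {b | b ∈ posRoots ρ ∧ ρ w⁻¹ b ∈ negRoots ρ}

/-- `N¹(w) = {α ∈ Φ⁺ : ℓ(s_α w) = ℓ(w) - 1}`. -/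
def nOne (cs : CoxeterSystem Mmat W) (ρ : W →* ((S → ℝ) ≃ₗ[ℝ] (S → ℝ)))
    (w : W) : Set (S → ℝ) :=
  {b | b ∈ posRoots ρ ∧
    ∃ t : W, IsReflIn Mmat ρ t b ∧ cs.length (t * w) + 1 = cs.length w}

/-- A low element of `W`: an element `w` with `N¹(w) ⊆ Σ`. -/
def IsLow (cs : CoxeterSystem Mmat W) (ρ : W →* ((S → ℝ) ≃ₗ[ℝ] (S → ℝ)))
    (w : W) : Prop :=
  ∀ b ∈ nOne cs ρ w, IsSmallRoot ρ b

end RootSystemDefs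

/-!
Everything rests on the geometric representation. A rank-two computation with Chebyshev
polynomials shows that `w(α_s)` is positive exactly when `s` is not a right descent of `w`; hence
every root is positive or negative, and `s` permutes `Φ⁺ \ {α_s}`. This gives (i), and shows that
`s` transports dominance away from `α_s`: `β` is small as soon as `s(β)` is small and `α_s ⋠ β`.
Whether `α_s ≼ β` is decided by `B(α_s, β)`. If `B(x, y) ≤ -1`, the reflections in `x` and `y`
generate roots `a x + b y` with `a + b` unbounded, which cannot all lie in a finite inversion set,
so no `w` makes both `x` and `y` negative. If `|B(x, y)| < 1`, they rotate the plane of `x` and `y`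
by `2 arccos B(x, y)`, and following the sign of the coordinate sum around the circle gives a `w`
making `y` negative but not `x`. The length criterion reads two descents of `s_β` off one
coordinate of `s_β(α_s)`, and some `B(α_s, β)` is positive because `1 = ∑ β_s B(α_s, β)`.
-/

open Real

open Polynomial Polynomial.Chebyshev in
theorem Polynomial.Chebyshev.U_eval_cos_pi_div_nonneg {m : ℕ} (hm : 2 ≤ m) {j : ℤ}
    (hj : 0 ≤ j + 1) (hjm : j + 1 ≤ m) : 0 ≤ (U ℝ j).eval (cos (π / m)) := by
  have hm' : (2 : ℝ) ≤ m := by exact_mod_cast hm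
  have hsin : 0 < sin (π / m) := sin_pos_of_pos_of_lt_pi (by positivity)
    (by rw [div_lt_iff₀ (by positivity)]; nlinarith [pi_pos])
  have hsin' : 0 ≤ sin ((j + 1) * (π / m)) := by
    have hj' : (0 : ℝ) ≤ j + 1 := by exact_mod_cast hj
    have hjm' : (j : ℝ) + 1 ≤ m := by exact_mod_cast hjm
    apply sin_nonneg_of_nonneg_of_le_pi (by positivity)
    rw [mul_div_assoc', div_le_iff₀ (by positivity)]
    nlinarith [pi_pos]
  rw [← U_real_cos] at hsin'
  exact nonneg_of_mul_nonneg_left hsin' hsin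

section Form

variable {S : Type*} [Fintype S] {Mmat : CoxeterMatrix S}

theorem bform_comm (v u : S → ℝ) : bform Mmat v u = bform Mmat u v := by
  unfold bform
  rw [Finset.sum_comm]
  refine Finset.sum_congr rfl fun s _ => Finset.sum_congr rfl fun t _ => ?_
  rw [Mmat.symmetric s t]
  ring

theorem bform_add_left (v v' u : S → ℝ) :
    bform Mmat (v + v') u = bform Mmat v u + bform Mmat v' u := by
  simp only [bform, Pi.add_apply, add_mul, Finset.sum_add_distrib]

theorem bform_sub_left (v v' u : S → ℝ) :
    bform Mmat (v - v') u = bform Mmat v u - bform Mmat v' u := by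
  simp only [bform, Pi.sub_apply, sub_mul, Finset.sum_sub_distrib]

theorem bform_smul_left (c : ℝ) (v u : S → ℝ) :
    bform Mmat (c • v) u = c * bform Mmat v u := by
  simp only [bform, Pi.smul_apply, smul_eq_mul, Finset.mul_sum, mul_assoc]

theorem bform_add_right (v u u' : S → ℝ) :
    bform Mmat v (u + u') = bform Mmat v u + bform Mmat v u' := by
  rw [bform_comm, bform_add_left, bform_comm u, bform_comm u']

theorem bform_sub_right (v u u' : S → ℝ) :
    bform Mmat v (u - u') = bform Mmat v u - bform Mmat v u' := by
  rw [bform_comm, bform_sub_left, bform_comm u, bform_comm u']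

theorem bform_smul_right (c : ℝ) (v u : S → ℝ) :
    bform Mmat v (c • u) = c * bform Mmat v u := by
  rw [bform_comm, bform_smul_left, bform_comm]

variable [DecidableEq S]

theorem sum_smul_simpleRoot (v : S → ℝ) : ∑ s, v s • simpleRoot s = v := by
  simp only [simpleRoot, ← Pi.single_smul', smul_eq_mul, mul_one]
  exact Finset.univ_sum_single v

theorem bform_simpleRoot_left (s : S) (u : S → ℝ) :
    bform Mmat (simpleRoot s) u =
      ∑ t, u t * (if Mmat s t = 0 then -1 else -cos (π / (Mmat s t : ℝ))) := by
  rw [bform, Finset.sum_eq_single s (fun s' _ hs' => by simp [simpleRoot, hs'])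
    (by simp)]
  simp [simpleRoot]

theorem bform_eq_sum_mul_bform_simpleRoot (v u : S → ℝ) :
    bform Mmat v u = ∑ s, v s * bform Mmat (simpleRoot s) u := by
  simp only [bform_simpleRoot_left, Finset.mul_sum]
  simp only [bform, mul_assoc]

theorem bform_simpleRoot_simpleRoot (s t : S) :
    bform Mmat (simpleRoot s) (simpleRoot t) =
      if Mmat s t = 0 then -1 else -cos (π / (Mmat s t : ℝ)) := by
  rw [bform_simpleRoot_left, Finset.sum_eq_single t (fun t' _ ht' => by simp [simpleRoot, ht'])
    (by simp)]
  simp [simpleRoot]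

theorem bform_simpleRoot_self (s : S) : bform Mmat (simpleRoot s) (simpleRoot s) = 1 := by
  simp [bform_simpleRoot_simpleRoot]

theorem exists_bform_simpleRoot_pos {v : S → ℝ} (hv : 0 ≤ v) (h : 0 < bform Mmat v v) :
    ∃ s, 0 < bform Mmat (simpleRoot s) v := by
  by_contra! hle
  rw [bform_eq_sum_mul_bform_simpleRoot] at h
  exact h.not_ge (Finset.sum_nonpos fun s _ => mul_nonpos_of_nonneg_of_nonpos (hv s) (hle s))

open Polynomial Polynomial.Chebyshev in
theorem U_eval_neg_bform_simpleRoot_nonneg {s t : S} (hst : s ≠ t) {j : ℤ} (hj : 0 ≤ j + 1)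
    (hjm : Mmat s t = 0 ∨ j + 1 ≤ Mmat s t) :
    0 ≤ (U ℝ j).eval (-bform Mmat (simpleRoot s) (simpleRoot t)) := by
  rw [bform_simpleRoot_simpleRoot]
  split_ifs with h0
  · simpa using (by exact_mod_cast hj : (0 : ℝ) ≤ j + 1)
  · rw [neg_neg]
    have h1 := Mmat.off_diagonal s t hst
    exact U_eval_cos_pi_div_nonneg (by omega) hj (hjm.resolve_left h0)

end Form

section Cone

variable {S : Type*} [DecidableEq S] {W : Type*} [Group W] {ρ : W →* ((S → ℝ) ≃ₗ[ℝ] (S → ℝ))}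

theorem simpleRoot_nonneg (s : S) : 0 ≤ simpleRoot s := by
  simp [simpleRoot, Pi.single_nonneg]

theorem simpleRoot_mem_rootSet (s : S) : simpleRoot s ∈ rootSet ρ := ⟨1, s, by simp⟩

theorem apply_mem_rootSet {z : S → ℝ} (hz : z ∈ rootSet ρ) (w : W) : ρ w z ∈ rootSet ρ := by
  obtain ⟨w', s, rfl⟩ := hz
  exact ⟨w * w', s, by simp⟩

theorem Dominates.apply {a b : S → ℝ} (h : Dominates ρ a b) (v : W) :
    Dominates ρ (ρ v a) (ρ v b) := fun w hw => by
  simpa using h (w * v) (by simpa using hw)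

variable [Fintype S]

theorem mem_coneOf_range_simpleRoot_iff {v : S → ℝ} :
    v ∈ coneOf (Set.range (simpleRoot (S := S))) ↔ 0 ≤ v := by
  constructor
  · rintro ⟨n, c, x, hc, hx, rfl⟩
    refine Finset.sum_nonneg fun i _ => smul_nonneg (hc i) ?_
    obtain ⟨s, hs⟩ := hx i
    exact hs ▸ simpleRoot_nonneg s
  · intro hv
    let e := Fintype.equivFin S
    refine ⟨Fintype.card S, fun i => v (e.symm i), fun i => simpleRoot (e.symm i),
      fun i => hv _, fun i => ⟨_, rfl⟩, ?_⟩
    rw [e.symm.sum_comp (fun s => v s • simpleRoot s), sum_smul_simpleRoot]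

theorem mem_posRoots_iff {b : S → ℝ} : b ∈ posRoots ρ ↔ b ∈ rootSet ρ ∧ 0 ≤ b := by
  rw [posRoots, Set.mem_inter_iff, mem_coneOf_range_simpleRoot_iff, and_comm]

theorem simpleRoot_mem_posRoots (s : S) : simpleRoot s ∈ posRoots ρ :=
  mem_posRoots_iff.2 ⟨simpleRoot_mem_rootSet s, simpleRoot_nonneg s⟩

end Cone

section Reflections

variable {S : Type*} [Fintype S] {Mmat : CoxeterMatrix S} {W : Type*} [Group W]
  {ρ : W →* ((S → ℝ) ≃ₗ[ℝ] (S → ℝ))} {r : W} {b : S → ℝ}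

namespace IsReflIn

theorem apply_self (hr : IsReflIn Mmat ρ r b) (hb : bform Mmat b b = 1) : ρ r b = -b := by
  rw [hr b, hb]
  module

theorem apply_apply (hr : IsReflIn Mmat ρ r b) (hb : bform Mmat b b = 1) (v : S → ℝ) :
    ρ r (ρ r v) = v := by
  rw [hr v, map_sub, map_smul, apply_self hr hb, hr v]
  module

theorem inv (hr : IsReflIn Mmat ρ r b) (hb : bform Mmat b b = 1) : IsReflIn Mmat ρ r⁻¹ b := by
  intro v
  have hv : ρ r (ρ r⁻¹ v) = v := by simp
  rw [← hr v, ← apply_apply hr hb (ρ r⁻¹ v), hv]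

theorem bform_apply_apply (hr : IsReflIn Mmat ρ r b) (hb : bform Mmat b b = 1)
    (u v : S → ℝ) : bform Mmat (ρ r u) (ρ r v) = bform Mmat u v := by
  rw [hr u, hr v]
  simp only [bform_sub_left, bform_sub_right, bform_smul_left, bform_smul_right, hb,
    bform_comm u b]
  ring

end IsReflIn

variable [DecidableEq S]

def IsGeometricRep (cs : CoxeterSystem Mmat W) (ρ : W →* ((S → ℝ) ≃ₗ[ℝ] (S → ℝ))) : Prop :=
  ∀ s, IsReflIn Mmat ρ (cs.simple s) (simpleRoot s)

namespace IsGeometricRep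

variable {cs : CoxeterSystem Mmat W}

theorem bform_apply_apply (hρ : IsGeometricRep cs ρ) (w : W) (u v : S → ℝ) :
    bform Mmat (ρ w u) (ρ w v) = bform Mmat u v := by
  induction w using cs.simple_induction generalizing u v with
  | simple s => exact (hρ s).bform_apply_apply (bform_simpleRoot_self s) u v
  | one => simp
  | mul w w' hw hw' => simp [hw, hw']

theorem bform_self_of_mem_rootSet (hρ : IsGeometricRep cs ρ) {z : S → ℝ}
    (hz : z ∈ rootSet ρ) : bform Mmat z z = 1 := by
  obtain ⟨w, s, rfl⟩ := hz
  rw [hρ.bform_apply_apply, bform_simpleRoot_self]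

theorem ne_zero_of_mem_rootSet (hρ : IsGeometricRep cs ρ) {z : S → ℝ} (hz : z ∈ rootSet ρ) :
    z ≠ 0 := by
  rintro rfl
  simpa [bform] using hρ.bform_self_of_mem_rootSet hz

theorem simple_apply_simpleRoot (hρ : IsGeometricRep cs ρ) (s : S) :
    ρ (cs.simple s) (simpleRoot s) = -simpleRoot s :=
  (hρ s).apply_self (bform_simpleRoot_self s)

theorem simple_apply_simple_apply (hρ : IsGeometricRep cs ρ) (s : S) (v : S → ℝ) :
    ρ (cs.simple s) (ρ (cs.simple s) v) = v :=
  (hρ s).apply_apply (bform_simpleRoot_self s) v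

theorem simple_apply_of_ne (hρ : IsGeometricRep cs ρ) {s u : S} (hu : u ≠ s) (v : S → ℝ) :
    ρ (cs.simple s) v u = v u := by
  simp [hρ s v, simpleRoot, hu]

theorem bform_simpleRoot_simple_apply (hρ : IsGeometricRep cs ρ) (s : S) (v : S → ℝ) :
    bform Mmat (simpleRoot s) (ρ (cs.simple s) v) = -bform Mmat (simpleRoot s) v := by
  rw [hρ s v, bform_sub_right, bform_smul_right, bform_simpleRoot_self]
  ring

theorem neg_mem_rootSet (hρ : IsGeometricRep cs ρ) {z : S → ℝ} (hz : z ∈ rootSet ρ) :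
    -z ∈ rootSet ρ := by
  obtain ⟨w, s, rfl⟩ := hz
  exact ⟨w * cs.simple s, s, by simp [hρ.simple_apply_simpleRoot]⟩

theorem exists_isReflIn (hρ : IsGeometricRep cs ρ) {z : S → ℝ} (hz : z ∈ rootSet ρ) :
    ∃ r : W, IsReflIn Mmat ρ r z := by
  obtain ⟨w, s, rfl⟩ := hz
  refine ⟨w * cs.simple s * w⁻¹, fun v => ?_⟩
  have hv : ρ w (ρ w⁻¹ v) = v := by simp
  rw [map_mul, map_mul, LinearEquiv.mul_apply, LinearEquiv.mul_apply, hρ s, map_sub, map_smul,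
    hv, ← hρ.bform_apply_apply w (simpleRoot s), hv]

theorem mem_negRoots_iff (hρ : IsGeometricRep cs ρ) {b : S → ℝ} :
    b ∈ negRoots ρ ↔ b ∈ rootSet ρ ∧ b ≤ 0 := by
  change -b ∈ posRoots ρ ↔ _
  rw [mem_posRoots_iff, neg_nonneg]
  exact and_congr_left' ⟨fun h => neg_neg b ▸ hρ.neg_mem_rootSet h, hρ.neg_mem_rootSet⟩

theorem notMem_negRoots_of_mem_posRoots (hρ : IsGeometricRep cs ρ) {b : S → ℝ}
    (hb : b ∈ posRoots ρ) : b ∉ negRoots ρ := fun hb' =>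
  hρ.ne_zero_of_mem_rootSet (mem_posRoots_iff.1 hb).1
    (le_antisymm ((hρ.mem_negRoots_iff.1 hb').2) (mem_posRoots_iff.1 hb).2)

end IsGeometricRep

end Reflections

namespace CoxeterSystem

variable {B : Type*} {M : CoxeterMatrix B} {W : Type*} [Group W] (cs : CoxeterSystem M W)

theorem le_of_length_mul_wordProd_alternatingWord {u : W} {s t : B} {n : ℕ}
    (h : cs.length (u * cs.wordProd (alternatingWord s t n)) = cs.length u + n) :
    M s t = 0 ∨ n ≤ M s t := by
  by_contra! hn
  refine cs.not_isReduced_alternatingWord s t hn.1 hn.2 ?_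
  have h₁ := cs.length_mul_le u (cs.wordProd (alternatingWord s t n))
  have h₂ := cs.length_wordProd_le (alternatingWord s t n)
  rw [length_alternatingWord] at h₂
  rw [IsReduced, length_alternatingWord]
  omega

theorem exists_eq_mul_wordProd_alternatingWord {w : W} {s t : B} (hst : s ≠ t)
    (hs : ¬cs.IsRightDescent w s) (ht : cs.IsRightDescent w t) :
    ∃ (u : W) (n : ℕ), 0 < n ∧ w = u * cs.wordProd (alternatingWord s t n) ∧
      cs.length w = cs.length u + n ∧ ¬cs.IsRightDescent u s ∧ ¬cs.IsRightDescent u t := by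
  induction h : cs.length w using Nat.strong_induction_on generalizing w s t with
  | _ N ih =>
  subst h
  have hw : w = w * cs.simple t * cs.simple t := by simp
  have hlen := cs.isRightDescent_iff.1 ht
  have hwt : ¬cs.IsRightDescent (w * cs.simple t) t := by
    rw [cs.not_isRightDescent_iff, ← hw]
    omega
  by_cases hws : cs.IsRightDescent (w * cs.simple t) s
  · obtain ⟨u, n, -, hu, hlen', hut, hus⟩ := ih _ (by omega) hst.symm hwt hws rfl
    refine ⟨u, n + 1, n.succ_pos, ?_, by omega, hus, hut⟩
    rw [hw, hu, alternatingWord_succ, wordProd_concat, mul_assoc]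
  · exact ⟨w * cs.simple t, 1, one_pos, by simp [alternatingWord], by omega, hws, hwt⟩

end CoxeterSystem

theorem exists_sign_change_mul_cos_add_mul_sin {A B ψ : ℝ} (hA : 0 < A) (hψ : 0 < ψ)
    (hψπ : ψ ≤ π) :
    ∃ k : ℕ, 0 < A * cos (k * ψ) + B * sin (k * ψ) ∧
      A * cos ((k + 1) * ψ) + B * sin ((k + 1) * ψ) ≤ 0 := by
  set φ := arctan (B / A)
  have hφ : 0 < cos φ := cos_arctan_pos _
  have hsinφ : sin φ = B / A * cos φ := by
    rw [← tan_arctan (B / A), tan_eq_sin_div_cos, div_mul_cancel₀ _ hφ.ne']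
  have harm : ∀ θ, A * cos θ + B * sin θ = A / cos φ * cos (θ - φ) := by
    intro θ
    rw [cos_sub, hsinφ]
    field_simp
  -- Steps of length `ψ ≤ π` cannot jump over the half-period on which this sinusoid is `≤ 0`.
  have hex : ∃ j : ℕ, A * cos (j * ψ) + B * sin (j * ψ) ≤ 0 := by
    have h0 : 0 ≤ (π / 2 + φ) / ψ :=
      div_nonneg (by linarith [neg_pi_div_two_lt_arctan (B / A)]) hψ.le
    have h1 := Nat.le_ceil ((π / 2 + φ) / ψ)
    have h2 := Nat.ceil_lt_add_one h0
    rw [div_le_iff₀ hψ] at h1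
    rw [← sub_lt_iff_lt_add, lt_div_iff₀ hψ] at h2
    refine ⟨⌈(π / 2 + φ) / ψ⌉₊, ?_⟩
    rw [harm]
    exact mul_nonpos_of_nonneg_of_nonpos (by positivity)
      (cos_nonpos_of_pi_div_two_le_of_le (by linarith) (by nlinarith))
  classical
  have hj : Nat.find hex ≠ 0 := fun h => by simpa [h] using (Nat.find_spec hex).trans_lt hA
  obtain ⟨k, hk⟩ := Nat.exists_eq_add_one_of_ne_zero hj
  refine ⟨k, lt_of_not_ge (Nat.find_min hex (by omega)), ?_⟩
  simpa [hk] using Nat.find_spec hex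

section Rotation

variable {V : Type*} [AddCommGroup V] [Module ℝ V]

noncomputable def circlePoint (x e : V) (θ : ℝ) : V := cos θ • x + sin θ • e

@[simp]
theorem circlePoint_zero (x e : V) : circlePoint x e 0 = x := by simp [circlePoint]

theorem circlePoint_add_pi (x e : V) (θ : ℝ) :
    circlePoint x e (θ + π) = -circlePoint x e θ := by
  simp only [circlePoint, cos_add_pi, sin_add_pi, neg_smul, neg_add]

variable {S : Type*} [Fintype S] {Mmat : CoxeterMatrix S} {x e : S → ℝ}

theorem bform_circlePoint (hxx : bform Mmat x x = 1) (hxe : bform Mmat x e = 0)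
    (hee : bform Mmat e e = 1) (θ θ' : ℝ) :
    bform Mmat (circlePoint x e θ) (circlePoint x e θ') = cos (θ - θ') := by
  simp only [circlePoint, bform_add_left, bform_add_right, bform_smul_left, bform_smul_right,
    hxx, hxe, hee, bform_comm e x, cos_sub]
  ring

theorem IsReflIn.apply_circlePoint {W : Type*} [Group W] {ρ : W →* ((S → ℝ) ≃ₗ[ℝ] (S → ℝ))}
    {r : W} {θ₀ : ℝ} (hr : IsReflIn Mmat ρ r (circlePoint x e θ₀)) (hxx : bform Mmat x x = 1)
    (hxe : bform Mmat x e = 0) (hee : bform Mmat e e = 1) (θ : ℝ) :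
    ρ r (circlePoint x e θ) = circlePoint x e (2 * θ₀ + π - θ) := by
  obtain ⟨u, rfl⟩ : ∃ u, θ = θ₀ - u := ⟨θ₀ - θ, by ring⟩
  rw [hr, bform_circlePoint hxx hxe hee, show θ₀ - (θ₀ - u) = u by ring,
    show 2 * θ₀ + π - (θ₀ - u) = θ₀ + u + π by ring, circlePoint_add_pi]
  simp only [circlePoint, cos_add, sin_add, cos_sub, sin_sub]
  module

theorem exists_circlePoint_eq {y : S → ℝ} (hxx : bform Mmat x x = 1)
    (hyy : bform Mmat y y = 1) (h : |bform Mmat x y| < 1) :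
    ∃ e ψ, 0 < ψ ∧ ψ < π ∧ bform Mmat x e = 0 ∧ bform Mmat e e = 1 ∧ circlePoint x e ψ = y := by
  set c := bform Mmat x y
  obtain ⟨hc₁, hc₂⟩ := abs_lt.1 h
  have hcos : cos (arccos c) = c := cos_arccos hc₁.le hc₂.le
  have hsin : 0 < sin (arccos c) := sin_pos_of_pos_of_lt_pi (arccos_pos.2 hc₂) (arccos_lt_pi.2 hc₁)
  have hsin2 : sin (arccos c) ^ 2 = 1 - c ^ 2 := by
    linarith [hcos ▸ sin_sq_add_cos_sq (arccos c)]
  refine ⟨(sin (arccos c))⁻¹ • (y - c • x), arccos c, arccos_pos.2 hc₂, arccos_lt_pi.2 hc₁,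
    ?_, ?_, ?_⟩
  · rw [bform_smul_right, bform_sub_right, bform_smul_right, hxx]
    ring
  · simp only [bform_smul_left, bform_smul_right, bform_sub_left, bform_sub_right, hxx, hyy,
      bform_comm y x]
    field_simp
    linear_combination -hsin2
  · rw [circlePoint, hcos, smul_smul, mul_inv_cancel₀ hsin.ne', one_smul]
    module

end Rotation

section GeometricRep

open Polynomial Polynomial.Chebyshev CoxeterSystem

variable {S : Type*} [Fintype S] [DecidableEq S] {Mmat : CoxeterMatrix S} {W : Type*} [Group W]
  {cs : CoxeterSystem Mmat W} {ρ : W →* ((S → ℝ) ≃ₗ[ℝ] (S → ℝ))}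

namespace IsGeometricRep

theorem simple_apply_smul_add_smul (hρ : IsGeometricRep cs ρ) (s t : S) (a b : ℝ) :
    ρ (cs.simple s) (a • simpleRoot s + b • simpleRoot t) =
      (-2 * bform Mmat (simpleRoot s) (simpleRoot t) * b - a) • simpleRoot s +
        b • simpleRoot t := by
  rw [hρ s, bform_add_right, bform_smul_right, bform_smul_right, bform_simpleRoot_self]
  module

theorem apply_alternatingWord_simpleRoot (hρ : IsGeometricRep cs ρ) {s t : S} {c : ℝ}
    (hc : bform Mmat (simpleRoot s) (simpleRoot t) = -c) (n : ℕ) :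
    ρ (cs.wordProd (alternatingWord s t n)) (simpleRoot s) =
      (if Even n then (U ℝ n).eval c else (U ℝ (n - 1)).eval c) • simpleRoot s +
        (if Even n then (U ℝ (n - 1)).eval c else (U ℝ n).eval c) • simpleRoot t := by
  induction n with
  | zero => simp [alternatingWord]
  | succ n ih =>
    have hU : (U ℝ (n + 1 : ℕ)).eval c = 2 * c * (U ℝ n).eval c - (U ℝ (n - 1)).eval c := by
      simp [U_add_one]
    rw [alternatingWord_succ', wordProd_cons, map_mul, LinearEquiv.mul_apply, ih, hU]
    by_cases hn : Even n
    · have hn' : ¬Even (n + 1) := Nat.even_add_one.not.2 (not_not.2 hn)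
      simp only [hn, hn', ↓reduceIte]
      rw [add_comm, hρ.simple_apply_smul_add_smul, bform_comm, hc]
      push_cast
      simp only [add_sub_cancel_right]
      module
    · have hn' : Even (n + 1) := Nat.even_add_one.2 hn
      simp only [hn, hn', ↓reduceIte]
      rw [hρ.simple_apply_smul_add_smul, hc]
      push_cast
      simp only [add_sub_cancel_right]
      module

theorem exists_apply_alternatingWord_eq (hρ : IsGeometricRep cs ρ) {s t : S} (hst : s ≠ t)
    {n : ℕ} (hn : Mmat s t = 0 ∨ n < Mmat s t) :
    ∃ a b : ℝ, 0 ≤ a ∧ 0 ≤ b ∧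
      ρ (cs.wordProd (alternatingWord s t n)) (simpleRoot s) =
        a • simpleRoot s + b • simpleRoot t := by
  have h₁ := U_eval_neg_bform_simpleRoot_nonneg (j := n) hst (by omega)
    (hn.imp_right fun h => by exact_mod_cast h)
  have h₂ := U_eval_neg_bform_simpleRoot_nonneg (j := n - 1) hst (by omega)
    (hn.imp_right fun h => by omega)
  rw [hρ.apply_alternatingWord_simpleRoot (neg_neg _).symm]
  split_ifs
  exacts [⟨_, _, h₁, h₂, rfl⟩, ⟨_, _, h₂, h₁, rfl⟩]

theorem apply_simpleRoot_mem_posRoots (hρ : IsGeometricRep cs ρ) {w : W} {s : S}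
    (h : ¬cs.IsRightDescent w s) : ρ w (simpleRoot s) ∈ posRoots ρ := by
  induction hN : cs.length w using Nat.strong_induction_on generalizing w s with
  | _ N ih =>
  subst hN
  by_cases hw : w = 1
  · simpa [hw] using simpleRoot_mem_posRoots s
  obtain ⟨t, ht⟩ := cs.exists_rightDescent_of_ne_one hw
  have hst : s ≠ t := by
    rintro rfl
    exact h ht
  obtain ⟨u, n, hn, rfl, hlen, hus, hut⟩ := cs.exists_eq_mul_wordProd_alternatingWord hst h ht
  have hbound : Mmat s t = 0 ∨ n < Mmat s t := by
    have hlen' : cs.length (u * cs.wordProd (alternatingWord t s (n + 1))) =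
        cs.length u + (n + 1) := by
      rw [alternatingWord_succ, wordProd_concat, ← mul_assoc, (cs.not_isRightDescent_iff).1 h,
        hlen, add_assoc]
    rw [Mmat.symmetric s t]
    exact cs.le_of_length_mul_wordProd_alternatingWord hlen'
  obtain ⟨a, b, ha, hb, hab⟩ := hρ.exists_apply_alternatingWord_eq hst hbound
  have hus' := mem_posRoots_iff.1 (ih _ (by omega) hus rfl)
  have hut' := mem_posRoots_iff.1 (ih _ (by omega) hut rfl)
  refine mem_posRoots_iff.2 ⟨apply_mem_rootSet (simpleRoot_mem_rootSet s) _, ?_⟩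
  rw [map_mul, LinearEquiv.mul_apply, hab, map_add, map_smul, map_smul]
  exact add_nonneg (smul_nonneg ha hus'.2) (smul_nonneg hb hut'.2)

theorem isRightDescent_iff (hρ : IsGeometricRep cs ρ) {w : W} {s : S} :
    cs.IsRightDescent w s ↔ ρ w (simpleRoot s) ∈ negRoots ρ := by
  constructor
  · intro h
    have h' : ¬cs.IsRightDescent (w * cs.simple s) s := by
      rwa [← cs.isRightDescent_iff_not_isRightDescent_mul]
    have := hρ.apply_simpleRoot_mem_posRoots h'
    rwa [map_mul, LinearEquiv.mul_apply, hρ.simple_apply_simpleRoot, map_neg] at this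
  · intro h
    by_contra h'
    exact hρ.notMem_negRoots_of_mem_posRoots (hρ.apply_simpleRoot_mem_posRoots h') h

theorem isLeftDescent_iff (hρ : IsGeometricRep cs ρ) {w : W} {s : S} :
    cs.IsLeftDescent w s ↔ ρ w⁻¹ (simpleRoot s) ∈ negRoots ρ := by
  rw [← cs.isRightDescent_inv_iff, hρ.isRightDescent_iff]

theorem mem_posRoots_or_mem_negRoots (hρ : IsGeometricRep cs ρ) {z : S → ℝ}
    (hz : z ∈ rootSet ρ) : z ∈ posRoots ρ ∨ z ∈ negRoots ρ := by
  obtain ⟨w, s, rfl⟩ := hz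
  by_cases h : cs.IsRightDescent w s
  · exact .inr (hρ.isRightDescent_iff.1 h)
  · exact .inl (hρ.apply_simpleRoot_mem_posRoots h)

theorem mem_posRoots_of_pos_apply (hρ : IsGeometricRep cs ρ) {z : S → ℝ} (hz : z ∈ rootSet ρ)
    {u : S} (hu : 0 < z u) : z ∈ posRoots ρ :=
  (hρ.mem_posRoots_or_mem_negRoots hz).resolve_right fun h =>
    ((hρ.mem_negRoots_iff.1 h).2 u).not_gt hu

theorem mem_negRoots_of_apply_neg (hρ : IsGeometricRep cs ρ) {z : S → ℝ} (hz : z ∈ rootSet ρ)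
    {u : S} (hu : z u < 0) : z ∈ negRoots ρ :=
  (hρ.mem_posRoots_or_mem_negRoots hz).resolve_left fun h =>
    ((mem_posRoots_iff.1 h).2 u).not_gt hu

theorem sum_pos_of_mem_posRoots (hρ : IsGeometricRep cs ρ) {b : S → ℝ} (hb : b ∈ posRoots ρ) :
    0 < ∑ u, b u := by
  obtain ⟨hb, hb0⟩ := mem_posRoots_iff.1 hb
  obtain ⟨u, hu⟩ := Function.ne_iff.1 (hρ.ne_zero_of_mem_rootSet hb)
  exact Finset.sum_pos' (fun u _ => hb0 u) ⟨u, Finset.mem_univ u, (hb0 u).lt_of_ne' hu⟩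

theorem sum_neg_of_mem_negRoots (hρ : IsGeometricRep cs ρ) {b : S → ℝ} (hb : b ∈ negRoots ρ) :
    ∑ u, b u < 0 := by
  simpa [Finset.sum_neg_distrib] using hρ.sum_pos_of_mem_posRoots hb

theorem mem_negRoots_of_sum_nonpos (hρ : IsGeometricRep cs ρ) {z : S → ℝ} (hz : z ∈ rootSet ρ)
    (h : ∑ u, z u ≤ 0) : z ∈ negRoots ρ :=
  (hρ.mem_posRoots_or_mem_negRoots hz).resolve_left fun hz' =>
    (hρ.sum_pos_of_mem_posRoots hz').not_ge h

theorem exists_pos_apply_ne (hρ : IsGeometricRep cs ρ) {b : S → ℝ} (hb : b ∈ posRoots ρ) {s : S}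
    (hbs : b ≠ simpleRoot s) : ∃ u ≠ s, 0 < b u := by
  by_contra! h
  obtain ⟨hb, hb0⟩ := mem_posRoots_iff.1 hb
  have hbs' : b = b s • simpleRoot s := by
    funext u
    by_cases hu : u = s
    · simp [hu, simpleRoot]
    · simp [hu, simpleRoot, le_antisymm (h u hu) (hb0 u)]
  have hnorm := hρ.bform_self_of_mem_rootSet hb
  rw [hbs', bform_smul_left, bform_smul_right, bform_simpleRoot_self] at hnorm
  have hbs0 : 0 ≤ b s := hb0 s
  have hbs1 : b s = 1 := by nlinarith
  exact hbs (by rw [hbs', hbs1, one_smul])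

theorem simple_apply_mem_posRoots (hρ : IsGeometricRep cs ρ) {b : S → ℝ} (hb : b ∈ posRoots ρ)
    {s : S} (hbs : b ≠ simpleRoot s) : ρ (cs.simple s) b ∈ posRoots ρ := by
  obtain ⟨u, hu, hbu⟩ := hρ.exists_pos_apply_ne hb hbs
  exact hρ.mem_posRoots_of_pos_apply (apply_mem_rootSet (mem_posRoots_iff.1 hb).1 _)
    (u := u) (by rwa [hρ.simple_apply_of_ne hu])

theorem finite_invSet (hρ : IsGeometricRep cs ρ) (w : W) : (invSet ρ w).Finite := by
  induction w using cs.simple_induction_left with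
  | one =>
    refine Set.finite_empty.subset fun b ⟨hb, hb'⟩ => ?_
    exact hρ.notMem_negRoots_of_mem_posRoots hb (by simpa using hb')
  | mul_simple_left w s ih =>
    refine ((ih.image (ρ (cs.simple s))).insert (simpleRoot s)).subset fun b ⟨hb, hwb⟩ => ?_
    by_cases hbs : b = simpleRoot s
    · exact .inl hbs
    · refine .inr ⟨ρ (cs.simple s) b, ⟨hρ.simple_apply_mem_posRoots hb hbs, ?_⟩,
        hρ.simple_apply_simple_apply s b⟩
      simpa [mul_inv_rev, cs.inv_simple] using hwb

theorem exists_smul_add_smul_mem_rootSet (hρ : IsGeometricRep cs ρ) {x y : S → ℝ}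
    (hx : x ∈ rootSet ρ) (hy : y ∈ rootSet ρ) (h : bform Mmat x y ≤ -1) (n : ℕ) :
    ∃ a b : ℝ, 0 ≤ a ∧ 0 ≤ b ∧ n ≤ a + b ∧ a • x + b • y ∈ rootSet ρ := by
  obtain ⟨rx, hrx⟩ := hρ.exists_isReflIn hx
  obtain ⟨ry, hry⟩ := hρ.exists_isReflIn hy
  have hxx := hρ.bform_self_of_mem_rootSet hx
  have hyy := hρ.bform_self_of_mem_rootSet hy
  -- As `B(x, y) ≤ -1`, reflecting in the root with the smaller coefficient adds `≥ 2` to `a + b`.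
  suffices ∀ n : ℕ, ∃ a b : ℝ, 0 ≤ a ∧ 0 ≤ b ∧ (a + 1 ≤ b ∨ b + 1 ≤ a) ∧ n ≤ a + b ∧
      a • x + b • y ∈ rootSet ρ by
    obtain ⟨a, b, ha, hb, -, hn, hab⟩ := this n
    exact ⟨a, b, ha, hb, hn, hab⟩
  intro n
  induction n with
  | zero => exact ⟨1, 0, zero_le_one, le_rfl, .inr (by norm_num), by norm_num, by simpa using hx⟩
  | succ n ih =>
    obtain ⟨a, b, ha, hb, hab | hab, hn, hz⟩ := ih
    · have hb' := mul_nonneg hb (by linarith : 0 ≤ -bform Mmat x y - 1)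
      refine ⟨-a - 2 * b * bform Mmat x y, b, by nlinarith, hb, .inr (by nlinarith),
        by push_cast; nlinarith, ?_⟩
      convert apply_mem_rootSet hz rx using 1
      rw [hrx, bform_add_right, bform_smul_right, bform_smul_right, hxx]
      module
    · have ha' := mul_nonneg ha (by linarith : 0 ≤ -bform Mmat x y - 1)
      refine ⟨a, -b - 2 * a * bform Mmat x y, ha, by nlinarith, .inl (by nlinarith),
        by push_cast; nlinarith, ?_⟩
      convert apply_mem_rootSet hz ry using 1
      rw [hry, bform_add_right, bform_smul_right, bform_smul_right, hyy, bform_comm y x]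
      module

theorem notMem_negRoots_of_bform_le_neg_one (hρ : IsGeometricRep cs ρ) {x y : S → ℝ}
    (hx : x ∈ posRoots ρ) (hy : y ∈ posRoots ρ) (h : bform Mmat x y ≤ -1) {w : W}
    (hwx : ρ w x ∈ negRoots ρ) : ρ w y ∉ negRoots ρ := by
  intro hwy
  obtain ⟨C, hC⟩ := ((hρ.finite_invSet w⁻¹).image fun z => ∑ u, z u).bddAbove
  have hF : 0 < min (∑ u, x u) (∑ u, y u) :=
    lt_min (hρ.sum_pos_of_mem_posRoots hx) (hρ.sum_pos_of_mem_posRoots hy)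
  obtain ⟨n, hn⟩ := exists_nat_gt (C / min (∑ u, x u) (∑ u, y u))
  rw [div_lt_iff₀ hF] at hn
  obtain ⟨a, b, ha, hb, hab, hz⟩ := hρ.exists_smul_add_smul_mem_rootSet
    (mem_posRoots_iff.1 hx).1 (mem_posRoots_iff.1 hy).1 h n
  have hmem : a • x + b • y ∈ invSet ρ w⁻¹ := by
    refine ⟨mem_posRoots_iff.2 ⟨hz, add_nonneg (smul_nonneg ha (mem_posRoots_iff.1 hx).2)
      (smul_nonneg hb (mem_posRoots_iff.1 hy).2)⟩, hρ.mem_negRoots_iff.2 ⟨?_, ?_⟩⟩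
    · simpa using apply_mem_rootSet hz w
    · simpa using add_nonpos (smul_nonpos_of_nonneg_of_nonpos ha (hρ.mem_negRoots_iff.1 hwx).2)
        (smul_nonpos_of_nonneg_of_nonpos hb (hρ.mem_negRoots_iff.1 hwy).2)
  have hle := hC ⟨_, hmem, rfl⟩
  simp only [Pi.add_apply, Pi.smul_apply, smul_eq_mul, Finset.sum_add_distrib,
    ← Finset.mul_sum] at hle
  nlinarith [min_le_left (∑ u, x u) (∑ u, y u), min_le_right (∑ u, x u) (∑ u, y u)]

theorem dominates_simpleRoot_of_one_le_bform (hρ : IsGeometricRep cs ρ) {b : S → ℝ}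
    (hb : b ∈ posRoots ρ) {s : S} (hbs : b ≠ simpleRoot s)
    (h : 1 ≤ bform Mmat (simpleRoot s) b) : Dominates ρ (simpleRoot s) b := by
  intro w hwb
  by_contra hws
  have hpos := (hρ.mem_posRoots_or_mem_negRoots
    (apply_mem_rootSet (simpleRoot_mem_rootSet s) w)).resolve_right hws
  refine hρ.notMem_negRoots_of_bform_le_neg_one (simpleRoot_mem_posRoots s)
    (hρ.simple_apply_mem_posRoots hb hbs) (w := w * cs.simple s) ?_ ?_ ?_
  · rw [hρ.bform_simpleRoot_simple_apply]
    linarith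
  · simpa [hρ.simple_apply_simpleRoot, negRoots] using hpos
  · simpa [hρ.simple_apply_simple_apply] using hwb

theorem exists_apply_eq_circlePoint (hρ : IsGeometricRep cs ρ) {x e : S → ℝ} {ψ : ℝ}
    (hxx : bform Mmat x x = 1) (hxe : bform Mmat x e = 0) (hee : bform Mmat e e = 1)
    (hx : x ∈ rootSet ρ) (hy : circlePoint x e ψ ∈ rootSet ρ) (k : ℕ) :
    ∃ w : W, (ρ w x = circlePoint x e (k * ψ) ∧
        ρ w (circlePoint x e ψ) = circlePoint x e ((k + 1) * ψ)) ∨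
      (ρ w x = -circlePoint x e ((k + 1) * ψ) ∧
        ρ w (circlePoint x e ψ) = -circlePoint x e (k * ψ)) := by
  induction k with
  | zero => exact ⟨1, .inl (by simp)⟩
  | succ k ih =>
    obtain ⟨w, hw⟩ := ih
    have hroot : circlePoint x e ((k + 1) * ψ) ∈ rootSet ρ := by
      rcases hw with ⟨-, hw⟩ | ⟨hw, -⟩
      · exact hw ▸ apply_mem_rootSet hy w
      · simpa [hw] using hρ.neg_mem_rootSet (apply_mem_rootSet hx w)
    -- The reflection in the root at angle `(k + 1) ψ` turns one configuration into the other.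
    obtain ⟨r, hr⟩ := hρ.exists_isReflIn hroot
    have hneg (θ : ℝ) : -circlePoint x e θ = circlePoint x e (θ + π) :=
      (circlePoint_add_pi x e θ).symm
    refine ⟨r * w, ?_⟩
    simp only [map_mul, LinearEquiv.mul_apply]
    rcases hw with ⟨h₁, h₂⟩ | ⟨h₁, h₂⟩
    on_goal 1 => refine .inr ⟨?_, ?_⟩
    on_goal 3 => refine .inl ⟨?_, ?_⟩
    all_goals
      simp only [h₁, h₂, hneg, hr.apply_circlePoint hxx hxe hee]
      congr 1
      push_cast
      ring

theorem not_dominates_of_abs_bform_lt_one (hρ : IsGeometricRep cs ρ) {x y : S → ℝ}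
    (hx : x ∈ posRoots ρ) (hy : y ∈ rootSet ρ) (h : |bform Mmat x y| < 1) :
    ¬Dominates ρ x y := by
  have hxx := hρ.bform_self_of_mem_rootSet (mem_posRoots_iff.1 hx).1
  obtain ⟨e, ψ, hψ, hψπ, hxe, hee, rfl⟩ :=
    exists_circlePoint_eq hxx (hρ.bform_self_of_mem_rootSet hy) h
  have hsum (θ : ℝ) :
      ∑ u, circlePoint x e θ u = (∑ u, x u) * cos θ + (∑ u, e u) * sin θ := by
    simp only [circlePoint, Pi.add_apply, Pi.smul_apply, smul_eq_mul, Finset.sum_add_distrib,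
      ← Finset.mul_sum]
    ring
  obtain ⟨k, hk, hk'⟩ := exists_sign_change_mul_cos_add_mul_sin (B := ∑ u, e u)
    (hρ.sum_pos_of_mem_posRoots hx) hψ hψπ.le
  obtain ⟨w, ⟨hwx, hwy⟩ | ⟨hwx, hwy⟩⟩ :=
    hρ.exists_apply_eq_circlePoint hxx hxe hee (mem_posRoots_iff.1 hx).1 hy k
  all_goals
    intro hdom
    have hwy' := hρ.mem_negRoots_of_sum_nonpos (apply_mem_rootSet hy w)
      (by simp only [hwy, Pi.neg_apply, Finset.sum_neg_distrib, hsum]; linarith)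
    have hwx' := hρ.sum_neg_of_mem_negRoots (hdom w hwy')
    simp only [hwx, Pi.neg_apply, Finset.sum_neg_distrib, hsum] at hwx'
    linarith

theorem isSmallRoot_simpleRoot (hρ : IsGeometricRep cs ρ) (s : S) :
    IsSmallRoot ρ (simpleRoot s) := by
  refine ⟨simpleRoot_mem_posRoots s, fun a ha hdom => ?_⟩
  by_contra has
  refine hρ.notMem_negRoots_of_mem_posRoots (hρ.simple_apply_mem_posRoots ha has)
    (hdom (cs.simple s) ?_)
  simpa [hρ.simple_apply_simpleRoot, negRoots] using simpleRoot_mem_posRoots s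

theorem bform_simpleRoot_pos_iff_length_conj (hρ : IsGeometricRep cs ρ) {b : S → ℝ}
    (hb : b ∈ posRoots ρ) {s : S} (hbs : b ≠ simpleRoot s) {t : W} (ht : IsReflIn Mmat ρ t b) :
    0 < bform Mmat (simpleRoot s) b ↔
      cs.length (cs.simple s * t * cs.simple s) + 2 = cs.length t := by
  have hbb := hρ.bform_self_of_mem_rootSet (mem_posRoots_iff.1 hb).1
  have hαs : ρ t (simpleRoot s) = simpleRoot s - (2 * bform Mmat (simpleRoot s) b) • b := by
    rw [ht, bform_comm]
  have hleft : cs.IsLeftDescent t s ↔ ρ t (simpleRoot s) ∈ negRoots ρ := by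
    rw [hρ.isLeftDescent_iff, ht.inv hbb, ← ht]
  have hroot : ρ t (simpleRoot s) ∈ rootSet ρ := apply_mem_rootSet (simpleRoot_mem_rootSet s) t
  constructor
  · intro hpos
    obtain ⟨u, hu, hbu⟩ := hρ.exists_pos_apply_ne hb hbs
    have hneg : ρ t (simpleRoot s) u < 0 := by
      rw [hαs]
      simp [simpleRoot, hu]
      positivity
    have h₁ := cs.isLeftDescent_iff.1 (hleft.2 (hρ.mem_negRoots_of_apply_neg hroot hneg))
    have h₂ := cs.isRightDescent_iff.1 <| hρ.isRightDescent_iff.2 <|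
      hρ.mem_negRoots_of_apply_neg (apply_mem_rootSet (simpleRoot_mem_rootSet s) _) (u := u)
        (by rwa [map_mul, LinearEquiv.mul_apply, hρ.simple_apply_of_ne hu])
    omega
  · intro hlen
    have h₁ : cs.IsLeftDescent t s := by
      rw [cs.isLeftDescent_iff]
      rcases cs.length_simple_mul t s with h | h
      · have := cs.length_mul_simple (cs.simple s * t) s
        omega
      · exact h
    have hs := (hρ.mem_negRoots_iff.1 (hleft.1 h₁)).2 s
    have hbs0 : 0 ≤ b s := (mem_posRoots_iff.1 hb).2 s
    rw [hαs, Pi.sub_apply, Pi.smul_apply, smul_eq_mul, Pi.zero_apply,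
      show simpleRoot s s = 1 by simp [simpleRoot]] at hs
    by_contra! hle
    nlinarith

theorem isSmallRoot_of_isSmallRoot_simple_apply (hρ : IsGeometricRep cs ρ) {b : S → ℝ}
    (hb : b ∈ posRoots ρ) {s : S} (hsmall : IsSmallRoot ρ (ρ (cs.simple s) b))
    (hdom : ¬Dominates ρ (simpleRoot s) b) : IsSmallRoot ρ b := by
  refine ⟨hb, fun a ha hab => ?_⟩
  have has : a ≠ simpleRoot s := by
    rintro rfl
    exact hdom hab
  exact (ρ (cs.simple s)).injective
    (hsmall.2 _ (hρ.simple_apply_mem_posRoots ha has) (hab.apply _))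

theorem isSmallRoot_iff_of_bform_pos (hρ : IsGeometricRep cs ρ) {b : S → ℝ}
    (hb : b ∈ posRoots ρ) {s : S} (hbs : b ≠ simpleRoot s)
    (hpos : 0 < bform Mmat (simpleRoot s) b) :
    IsSmallRoot ρ b ↔
      IsSmallRoot ρ (ρ (cs.simple s) b) ∧ bform Mmat (simpleRoot s) b < 1 := by
  have hγ := hρ.simple_apply_mem_posRoots hb hbs
  constructor
  · intro hsmall
    have hlt : bform Mmat (simpleRoot s) b < 1 := by
      by_contra! hle
      exact hbs (hsmall.2 _ (simpleRoot_mem_posRoots s)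
        (hρ.dominates_simpleRoot_of_one_le_bform hb hbs hle)).symm
    refine ⟨hρ.isSmallRoot_of_isSmallRoot_simple_apply (s := s) hγ ?_ ?_, hlt⟩
    · rwa [hρ.simple_apply_simple_apply]
    · refine hρ.not_dominates_of_abs_bform_lt_one (simpleRoot_mem_posRoots s)
        (mem_posRoots_iff.1 hγ).1 ?_
      rw [hρ.bform_simpleRoot_simple_apply, abs_neg, abs_of_pos hpos]
      exact hlt
  · rintro ⟨hsmall, hlt⟩
    exact hρ.isSmallRoot_of_isSmallRoot_simple_apply hb hsmall
      (hρ.not_dominates_of_abs_bform_lt_one (simpleRoot_mem_posRoots s)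
        (mem_posRoots_iff.1 hb).1 (abs_lt.2 ⟨by linarith, hlt⟩))

end IsGeometricRep

end GeometricRep

theorem simple_small_and_small_criterion_general {S : Type*} [Fintype S] [DecidableEq S]
    (Mmat : CoxeterMatrix S) {W : Type*} [Group W] (cs : CoxeterSystem Mmat W)
    (ρ : W →* ((S → ℝ) ≃ₗ[ℝ] (S → ℝ)))
    (hρ : ∀ (s : S) (v : S → ℝ),
      ρ (cs.simple s) v = v - (2 * bform Mmat (simpleRoot s) v) • simpleRoot s) :
    (∀ s : S, IsSmallRoot ρ (simpleRoot s)) ∧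
    (∀ b : S → ℝ, b ∈ posRoots ρ → b ∉ Set.range (simpleRoot (S := S)) →
      (∃ s : S, 0 < bform Mmat (simpleRoot s) b) ∧
      (∀ (s : S) (t : W), IsReflIn Mmat ρ t b →
        (0 < bform Mmat (simpleRoot s) b ↔
          cs.length (cs.simple s * t * cs.simple s) + 2 = cs.length t)) ∧
      (∀ s : S, 0 < bform Mmat (simpleRoot s) b →
        (IsSmallRoot ρ b ↔
          (IsSmallRoot ρ (ρ (cs.simple s) b) ∧ bform Mmat (simpleRoot s) b < 1)))) := by
  have hgeom : IsGeometricRep cs ρ := hρ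
  refine ⟨hgeom.isSmallRoot_simpleRoot, fun b hb hbΔ => ?_⟩
  have hbs (s : S) : b ≠ simpleRoot s := fun h => hbΔ ⟨s, h.symm⟩
  have hbb := hgeom.bform_self_of_mem_rootSet (mem_posRoots_iff.1 hb).1
  exact ⟨exists_bform_simpleRoot_pos (mem_posRoots_iff.1 hb).2 (hbb ▸ one_pos),
    fun s _ ht => hgeom.bform_simpleRoot_pos_iff_length_conj hb (hbs s) ht,
    fun s hpos => hgeom.isSmallRoot_iff_of_bform_pos hb (hbs s) hpos⟩

/-- **Lemma 4.2.** (i) Every simple root is small.  (ii) For every positive root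
`β ∈ Φ⁺ \ Δ` there is a simple root `α` with `B(α, β) > 0`, equivalently
`ℓ(s_α s_β s_α) = ℓ(s_β) − 2`; and for every such `α`, `β` is small if and only if
`s_α(β)` is small and `B(α, β) < 1`. -/
theorem simple_small_and_small_criterion {S : Type*} [Fintype S] [DecidableEq S]
    (Mmat : CoxeterMatrix S) {W : Type*} [Group W] (cs : CoxeterSystem Mmat W)
    (ρ : W →* ((S → ℝ) ≃ₗ[ℝ] (S → ℝ)))
    (hfaith : Function.Injective ρ)
    (hρ : ∀ (s : S) (v : S → ℝ),
      ρ (cs.simple s) v = v - (2 * bform Mmat (simpleRoot s) v) • simpleRoot s) :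
    (∀ s : S, IsSmallRoot ρ (simpleRoot s)) ∧
    (∀ b : S → ℝ, b ∈ posRoots ρ → b ∉ Set.range (simpleRoot (S := S)) →
      (∃ s : S, 0 < bform Mmat (simpleRoot s) b) ∧
      (∀ (s : S) (t : W), IsReflIn Mmat ρ t b →
        (0 < bform Mmat (simpleRoot s) b ↔
          cs.length (cs.simple s * t * cs.simple s) + 2 = cs.length t)) ∧
      (∀ s : S, 0 < bform Mmat (simpleRoot s) b →
        (IsSmallRoot ρ b ↔
          (IsSmallRoot ρ (ρ (cs.simple s) b) ∧ bform Mmat (simpleRoot s) b < 1)))) :=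
  simple_small_and_small_criterion_general Mmat cs ρ hρ
end

section
/- Let α ∈ Δ be a simple root and β ∈ Φ⁺ a positive root with β ≠ α. If B(α, β) ≤ −1, then the subgroup of W generated by the reflections s_α and s_β is infinite dihedral, and the set Φ⁺ ∩ cone({α, β}) of positive roots lying in the cone spanned by α and β is infinite. -/
namespace InfDihAux

section BformLemmas

variable {S : Type*} [Fintype S] [DecidableEq S]

set_option linter.unusedSectionVars false

theorem bform_symm (Mmat : CoxeterMatrix S) (v u : S → ℝ) : bform Mmat v u = bform Mmat u v := by
  unfold bform
  rw [Finset.sum_comm]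
  refine Finset.sum_congr rfl fun x _ => Finset.sum_congr rfl fun y _ => ?_
  rw [Mmat.symmetric y x]; ring

theorem bform_add_right (Mmat : CoxeterMatrix S) (v u1 u2 : S → ℝ) :
    bform Mmat v (u1 + u2) = bform Mmat v u1 + bform Mmat v u2 := by
  unfold bform
  rw [← Finset.sum_add_distrib]
  refine Finset.sum_congr rfl fun x _ => ?_
  rw [← Finset.sum_add_distrib]
  refine Finset.sum_congr rfl fun y _ => ?_
  simp only [Pi.add_apply]; ring

theorem bform_smul_right (Mmat : CoxeterMatrix S) (a : ℝ) (v u : S → ℝ) :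
    bform Mmat v (a • u) = a * bform Mmat v u := by
  unfold bform
  rw [Finset.mul_sum]
  refine Finset.sum_congr rfl fun x _ => ?_
  rw [Finset.mul_sum]
  refine Finset.sum_congr rfl fun y _ => ?_
  simp only [Pi.smul_apply, smul_eq_mul]; ring

theorem bform_sub_right (Mmat : CoxeterMatrix S) (v u1 u2 : S → ℝ) :
    bform Mmat v (u1 - u2) = bform Mmat v u1 - bform Mmat v u2 := by
  have h : u1 - u2 = u1 + (-1 : ℝ) • u2 := by module
  rw [h, bform_add_right, bform_smul_right]; ring

theorem bform_zero_right (Mmat : CoxeterMatrix S) (v : S → ℝ) : bform Mmat v 0 = 0 := by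
  have h := bform_smul_right Mmat 0 v 0
  simpa using h

theorem bform_sub_left (Mmat : CoxeterMatrix S) (u1 u2 v : S → ℝ) :
    bform Mmat (u1 - u2) v = bform Mmat u1 v - bform Mmat u2 v := by
  rw [bform_symm, bform_sub_right, bform_symm Mmat v u1, bform_symm Mmat v u2]

theorem bform_smul_left (Mmat : CoxeterMatrix S) (a : ℝ) (u v : S → ℝ) :
    bform Mmat (a • u) v = a * bform Mmat u v := by
  rw [bform_symm, bform_smul_right, bform_symm Mmat v u]

theorem bform_simple_self (Mmat : CoxeterMatrix S) (s : S) :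
    bform Mmat (simpleRoot s) (simpleRoot s) = 1 := by
  unfold bform simpleRoot
  rw [Finset.sum_eq_single s]
  · rw [Finset.sum_eq_single s]
    · simp [Mmat.diagonal s, Real.cos_pi]
    · intro y _ hy; simp [Pi.single_apply, hy]
    · intro h; exact absurd (Finset.mem_univ s) h
  · intro x _ hx; simp [Pi.single_apply, hx]
  · intro h; exact absurd (Finset.mem_univ s) h

variable {W : Type*} [Group W] {Mmat : CoxeterMatrix S}

theorem bform_invariant (cs : CoxeterSystem Mmat W) (ρ : W →* ((S → ℝ) ≃ₗ[ℝ] (S → ℝ)))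
    (hρ : ∀ (s : S) (v : S → ℝ),
      ρ (cs.simple s) v = v - (2 * bform Mmat (simpleRoot s) v) • simpleRoot s)
    (w : W) (u v : S → ℝ) : bform Mmat (ρ w u) (ρ w v) = bform Mmat u v := by
  have hw : w ∈ Subgroup.closure (Set.range cs.simple) := by
    rw [cs.subgroup_closure_range_simple]; trivial
  induction hw using Subgroup.closure_induction generalizing u v with
  | mem x hx =>
    obtain ⟨i, rfl⟩ := hx
    rw [hρ, hρ]
    simp only [bform_sub_right, bform_sub_left, bform_smul_right, bform_smul_left,
      bform_simple_self]
    rw [bform_symm Mmat u (simpleRoot i)]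
    ring
  | one => simp
  | mul x y _ _ hx hy =>
    have h1 : ∀ z, ρ (x * y) z = ρ x (ρ y z) := fun z => by rw [map_mul]; rfl
    rw [h1, h1, hx, hy]
  | inv x _ hx =>
    have h1 : ∀ z, ρ x (ρ x⁻¹ z) = z := fun z => by
      rw [show ρ x (ρ x⁻¹ z) = (ρ x * ρ x⁻¹) z from rfl, ← map_mul, mul_inv_cancel, map_one]
      rfl
    calc bform Mmat (ρ x⁻¹ u) (ρ x⁻¹ v)
        = bform Mmat (ρ x (ρ x⁻¹ u)) (ρ x (ρ x⁻¹ v)) := (hx _ _).symm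
      _ = bform Mmat u v := by rw [h1, h1]

theorem bform_root_self (cs : CoxeterSystem Mmat W) (ρ : W →* ((S → ℝ) ≃ₗ[ℝ] (S → ℝ)))
    (hρ : ∀ (s : S) (v : S → ℝ),
      ρ (cs.simple s) v = v - (2 * bform Mmat (simpleRoot s) v) • simpleRoot s)
    {b : S → ℝ} (hb : b ∈ rootSet ρ) : bform Mmat b b = 1 := by
  obtain ⟨w, r, rfl⟩ := hb
  rw [bform_invariant cs ρ hρ, bform_simple_self]

theorem coneOf_mem {V : Type*} [AddCommMonoid V] [Module ℝ V] {X : Set V} {x : V} (hx : x ∈ X) :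
    x ∈ coneOf X :=
  ⟨1, ![1], ![x], by simp, by simp [hx], by simp⟩

theorem coneOf_combo {V : Type*} [AddCommMonoid V] [Module ℝ V] {X : Set V} {x y : V}
    {a b : ℝ} (ha : 0 ≤ a) (hb : 0 ≤ b) (hx : x ∈ coneOf X) (hy : y ∈ coneOf X) :
    a • x + b • y ∈ coneOf X := by
  obtain ⟨n, c, v, hc, hv, rfl⟩ := hx
  obtain ⟨m, d, w, hd, hw, rfl⟩ := hy
  refine ⟨n + m, Fin.append (fun i => a * c i) (fun j => b * d j), Fin.append v w, ?_, ?_, ?_⟩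
  · intro i
    induction i using Fin.addCases with
    | left i => rw [Fin.append_left]; exact mul_nonneg ha (hc i)
    | right j => rw [Fin.append_right]; exact mul_nonneg hb (hd j)
  · intro i
    induction i using Fin.addCases with
    | left i => rw [Fin.append_left]; exact hv i
    | right j => rw [Fin.append_right]; exact hw j
  · rw [Fin.sum_univ_add]
    simp only [Fin.append_left, Fin.append_right, Finset.smul_sum, smul_smul]

theorem coneOf_pair {V : Type*} [AddCommMonoid V] [Module ℝ V] {x y : V} {a b : ℝ}
    (ha : 0 ≤ a) (hb : 0 ≤ b) : a • x + b • y ∈ coneOf {x, y} := by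
  refine ⟨2, ![a, b], ![x, y], ?_, ?_, ?_⟩
  · intro i; fin_cases i <;> assumption
  · intro i; fin_cases i <;> simp
  · simp [Fin.sum_univ_two]

theorem cone_simple_nonneg {v : S → ℝ}
    (hv : v ∈ coneOf (Set.range (simpleRoot (S := S)))) (t : S) : 0 ≤ v t := by
  obtain ⟨n, c, x, hc, hx, rfl⟩ := hv
  rw [Finset.sum_apply]
  refine Finset.sum_nonneg fun i _ => ?_
  obtain ⟨s, hs⟩ := hx i
  rw [Pi.smul_apply, ← hs, smul_eq_mul]
  refine mul_nonneg (hc i) ?_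
  rw [simpleRoot, Pi.single_apply]
  positivity

end BformLemmas

/-- coefficient pairs for the alternating reflection orbit -/
noncomputable def coefSeq (c : ℝ) : ℕ → ℝ × ℝ
  | 0 => (1, 0)
  | n + 1 =>
    let q := coefSeq c n
    if Even n then (q.1, 2 * c * q.1 - q.2) else (2 * c * q.2 - q.1, q.2)

def grpSeq {W : Type*} [Group W] (a t : W) : ℕ → W
  | 0 => 1
  | n + 1 => (if Even n then t else a) * grpSeq a t n

theorem coefSeq_succ_even {c : ℝ} {n : ℕ} (he : Even n) :
    coefSeq c (n + 1) = ((coefSeq c n).1, 2 * c * (coefSeq c n).1 - (coefSeq c n).2) := by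
  simp [coefSeq, he]

theorem coefSeq_succ_odd {c : ℝ} {n : ℕ} (he : ¬ Even n) :
    coefSeq c (n + 1) = (2 * c * (coefSeq c n).2 - (coefSeq c n).1, (coefSeq c n).2) := by
  simp [coefSeq, he]

theorem coefSeq_invariant {c : ℝ} (hc : 1 ≤ c) (n : ℕ) :
    0 ≤ (coefSeq c n).1 ∧ 0 ≤ (coefSeq c n).2 ∧
      (if Even n then (coefSeq c n).2 < (coefSeq c n).1
        else (coefSeq c n).1 < (coefSeq c n).2) := by
  induction n with
  | zero => norm_num [coefSeq]
  | succ n ih =>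
    obtain ⟨h1, h2, h3⟩ := ih
    by_cases he : Even n
    · rw [if_pos he] at h3
      have hne : ¬ Even (n + 1) := by simp [Nat.even_add_one, he]
      have hlt : (coefSeq c n).1 < 2 * c * (coefSeq c n).1 - (coefSeq c n).2 := by
        nlinarith [mul_nonneg (sub_nonneg.2 hc) h1]
      rw [coefSeq_succ_even he, if_neg hne]
      dsimp only
      exact ⟨h1, by linarith, hlt⟩
    · rw [if_neg he] at h3
      have hev : Even (n + 1) := Nat.even_add_one.2 he
      have hlt : (coefSeq c n).2 < 2 * c * (coefSeq c n).2 - (coefSeq c n).1 := by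
        nlinarith [mul_nonneg (sub_nonneg.2 hc) h2]
      rw [coefSeq_succ_odd he, if_pos hev]
      dsimp only
      exact ⟨by linarith, h2, hlt⟩

theorem coefSeq_max_strictMono {c : ℝ} (hc : 1 ≤ c) :
    StrictMono (fun n => max (coefSeq c n).1 (coefSeq c n).2) := by
  apply strictMono_nat_of_lt_succ
  intro n
  obtain ⟨h1, h2, h3⟩ := coefSeq_invariant hc n
  obtain ⟨h1', h2', h3'⟩ := coefSeq_invariant hc (n + 1)
  by_cases he : Even n
  · rw [if_pos he] at h3
    have hne : ¬ Even (n + 1) := by simp [Nat.even_add_one, he]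
    rw [if_neg hne] at h3'
    rw [coefSeq_succ_even he] at h3' ⊢
    simp only at h3' ⊢
    rw [max_eq_left h3.le, max_eq_right h3'.le]
    exact h3'
  · rw [if_neg he] at h3
    have hev : Even (n + 1) := Nat.even_add_one.2 he
    rw [if_pos hev] at h3'
    rw [coefSeq_succ_odd he] at h3' ⊢
    simp only at h3' ⊢
    rw [max_eq_right h3.le, max_eq_left h3'.le]
    exact h3'

theorem coefSeq_injective {c : ℝ} (hc : 1 ≤ c) : Function.Injective (coefSeq c) := by
  intro n m h
  exact (coefSeq_max_strictMono hc).injective (by simp only [h])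

theorem grpSeq_two_mul {W : Type*} [Group W] (a t : W) (k : ℕ) :
    grpSeq a t (2 * k) = (a * t) ^ k := by
  induction k with
  | zero => simp [grpSeq]
  | succ k ih =>
    have h2 : 2 * (k + 1) = (2 * k + 1) + 1 := by ring
    rw [h2, grpSeq, grpSeq, ih]
    have ho : ¬ Even (2 * k + 1) := by simp [Nat.even_add_one]
    have hee : Even (2 * k) := even_two_mul k
    rw [if_neg ho, if_pos hee, pow_succ']
    group

theorem infinite_dihedral_iso {W : Type*} [Group W] {a t : W}
    (ha : a * a = 1) (ht : t * t = 1) (htne : t ≠ 1)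
    (hord : ∀ k : ℕ, (a * t) ^ k = 1 → k = 0) :
    Nonempty ((Subgroup.closure {a, t}) ≃* DihedralGroup 0) := by
  set u := a * t with hu
  have hainv : a⁻¹ = a := inv_eq_of_mul_eq_one_right ha
  have htinv : t⁻¹ = t := inv_eq_of_mul_eq_one_right ht
  have hconj1 : t * u * t = u⁻¹ := by
    have h1 : u⁻¹ = t * a := by rw [hu, mul_inv_rev, hainv, htinv]
    rw [h1, hu, show t * (a * t) * t = t * a * (t * t) by group, ht, mul_one]
  have hconj : ∀ i : ℤ, t * u ^ i * t = u ^ (-i) := by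
    intro i
    have h2 : (MulAut.conj t) (u ^ i) = ((MulAut.conj t) u) ^ i := map_zpow _ _ _
    simp only [MulAut.conj_apply, htinv] at h2
    rw [h2, hconj1, inv_zpow, ← zpow_neg]
  have hcomm : ∀ i : ℤ, u ^ i * t = t * u ^ (-i) := by
    intro i
    calc u ^ i * t = t * (t * u ^ i * t) := by
          rw [← mul_assoc, ← mul_assoc, ht, one_mul]
      _ = t * u ^ (-i) := by rw [hconj]
  have huord : ∀ i : ℤ, u ^ i = 1 → i = 0 := by
    intro i h
    rcases Int.natAbs_eq i with hi | hi
    · have h1 : u ^ i.natAbs = 1 := by rw [← zpow_natCast, ← hi, h]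
      have := hord _ h1; omega
    · have h1 : (u ^ i.natAbs)⁻¹ = 1 := by rw [← zpow_natCast, ← zpow_neg, ← hi, h]
      rw [inv_eq_one] at h1
      have := hord _ h1; omega
  let toInt : ZMod 0 → ℤ := fun i => i
  have hadd : ∀ i j : ZMod 0, toInt (i + j) = toInt i + toInt j := fun _ _ => rfl
  have hsub : ∀ i j : ZMod 0, toInt (i - j) = toInt i - toInt j := fun _ _ => rfl
  let Fmap : DihedralGroup 0 → W := fun x =>
    match x with
    | DihedralGroup.r i => u ^ toInt i
    | DihedralGroup.sr i => t * u ^ toInt i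
  have hFmul : ∀ x y, Fmap (x * y) = Fmap x * Fmap y := by
    rintro (i | i) (j | j)
    · show u ^ toInt (i + j) = u ^ toInt i * u ^ toInt j
      rw [hadd, zpow_add]
    · show t * u ^ toInt (j - i) = u ^ toInt i * (t * u ^ toInt j)
      rw [hsub, ← mul_assoc, hcomm, mul_assoc, ← zpow_add]
      congr 1
      ring
    · show t * u ^ toInt (i + j) = t * u ^ toInt i * u ^ toInt j
      rw [hadd, zpow_add, mul_assoc]
    · show u ^ toInt (j - i) = t * u ^ toInt i * (t * u ^ toInt j)
      rw [hsub, mul_assoc, ← mul_assoc (u ^ toInt i), hcomm, ← mul_assoc, ← mul_assoc, ht,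
        one_mul, ← zpow_add]
      congr 1
      ring
  let F : DihedralGroup 0 →* W := MonoidHom.mk' Fmap hFmul
  have hFr : ∀ i : ZMod 0, F (DihedralGroup.r i) = u ^ toInt i := fun _ => rfl
  have hFsr : ∀ i : ZMod 0, F (DihedralGroup.sr i) = t * u ^ toInt i := fun _ => rfl
  have hFinj : Function.Injective F := by
    rw [injective_iff_map_eq_one]
    rintro (i | i) hx
    · rw [hFr] at hx
      have h0 : toInt i = 0 := huord _ hx
      rw [DihedralGroup.one_def]
      exact congrArg DihedralGroup.r h0
    · exfalso
      rw [hFsr] at hx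
      have ht' : t = (u ^ toInt i)⁻¹ := eq_inv_of_mul_eq_one_left hx
      have h1 : u ^ (-toInt i + -toInt i) = 1 := by
        rw [zpow_add, zpow_neg, ← ht', ht]
      have h0 : toInt i = 0 := by have := huord _ h1; omega
      rw [h0] at ht'
      simp at ht'
      exact htne ht'
  have hrange : F.range = Subgroup.closure {a, t} := by
    have hamem : a ∈ Subgroup.closure ({a, t} : Set W) :=
      Subgroup.subset_closure (Set.mem_insert _ _)
    have htmem : t ∈ Subgroup.closure ({a, t} : Set W) :=
      Subgroup.subset_closure (Set.mem_insert_of_mem _ rfl)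
    have humem : u ∈ Subgroup.closure ({a, t} : Set W) := mul_mem hamem htmem
    apply le_antisymm
    · rintro x ⟨y, rfl⟩
      rcases y with i | i
      · rw [hFr]; exact zpow_mem humem _
      · rw [hFsr]; exact mul_mem htmem (zpow_mem humem _)
    · rw [Subgroup.closure_le]
      intro x hx
      have haR : a ∈ F.range := ⟨DihedralGroup.sr (-1), by
        rw [hFsr]
        show t * u ^ (-1 : ℤ) = a
        rw [zpow_neg_one, hu, mul_inv_rev, hainv, htinv, ← mul_assoc, ht, one_mul]⟩
      have htR : t ∈ F.range := ⟨DihedralGroup.sr 0, by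
        rw [hFsr]
        show t * u ^ (0 : ℤ) = t
        rw [zpow_zero, mul_one]⟩
      rcases hx with h | h
      · rw [h]; exact haR
      · rw [Set.mem_singleton_iff] at h; rw [h]; exact htR
  exact ⟨((MonoidHom.ofInjective hFinj).trans (MulEquiv.subgroupCongr hrange)).symm⟩

end InfDihAux

/-- Let `α ∈ Δ` be a simple root and `β ∈ Φ⁺` a positive root with `β ≠ α`.  If
`B(α, β) ≤ −1`, then the subgroup of `W` generated by the reflections `s_α` and `s_β` is
infinite dihedral, and the set `Φ⁺ ∩ cone({α, β})` is infinite. -/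
theorem infinite_dihedral_of_bform_le_neg_one {S : Type*} [Fintype S] [DecidableEq S]
    (Mmat : CoxeterMatrix S) {W : Type*} [Group W] (cs : CoxeterSystem Mmat W)
    (ρ : W →* ((S → ℝ) ≃ₗ[ℝ] (S → ℝ)))
    (hfaith : Function.Injective ρ)
    (hρ : ∀ (s : S) (v : S → ℝ),
      ρ (cs.simple s) v = v - (2 * bform Mmat (simpleRoot s) v) • simpleRoot s)
    (s : S) (b : S → ℝ) (hb : b ∈ posRoots ρ) (hne : b ≠ simpleRoot s)
    (t : W) (ht : IsReflIn Mmat ρ t b)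
    (hB : bform Mmat (simpleRoot s) b ≤ -1) :
    Nonempty ((Subgroup.closure {cs.simple s, t}) ≃* DihedralGroup 0) ∧
    (posRoots ρ ∩ coneOf {simpleRoot s, b}).Infinite := by
  classical
  set α := simpleRoot s with hα
  set c : ℝ := -(bform Mmat α b) with hc_def
  have hc : 1 ≤ c := by rw [hc_def]; linarith
  have hαα : bform Mmat α α = 1 := InfDihAux.bform_simple_self Mmat s
  have hαβ : bform Mmat α b = -c := by rw [hc_def]; ring
  have hβα : bform Mmat b α = -c := by rw [InfDihAux.bform_symm]; exact hαβ
  have hββ : bform Mmat b b = 1 := InfDihAux.bform_root_self cs ρ hρ hb.2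
  have hb0 : b ≠ 0 := by
    intro h
    have h2 := hαβ
    rw [h, InfDihAux.bform_zero_right] at h2
    linarith
  have hBα : ∀ x y : ℝ, bform Mmat α (x • α + y • b) = x - c * y := by
    intro x y
    rw [InfDihAux.bform_add_right, InfDihAux.bform_smul_right, InfDihAux.bform_smul_right,
      hαα, hαβ]
    ring
  have hBβ : ∀ x y : ℝ, bform Mmat b (x • α + y • b) = y - c * x := by
    intro x y
    rw [InfDihAux.bform_add_right, InfDihAux.bform_smul_right, InfDihAux.bform_smul_right,
      hβα, hββ]
    ring
  have hact_s : ∀ x y : ℝ, ρ (cs.simple s) (x • α + y • b) = (2*c*y - x) • α + y • b := by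
    intro x y
    rw [hρ, hBα]
    module
  have hact_t : ∀ x y : ℝ, ρ t (x • α + y • b) = x • α + (2*c*x - y) • b := by
    intro x y
    rw [ht, hBβ]
    module
  have hroot : ∀ n : ℕ, ρ (InfDihAux.grpSeq (cs.simple s) t n) α
      = (InfDihAux.coefSeq c n).1 • α + (InfDihAux.coefSeq c n).2 • b := by
    intro n
    induction n with
    | zero =>
      show ρ 1 α = (1:ℝ) • α + (0:ℝ) • b
      rw [map_one]
      simp
    | succ n ih =>
      rw [InfDihAux.grpSeq, map_mul,
        show ∀ (f g : (S→ℝ) ≃ₗ[ℝ] (S→ℝ)) v, (f * g) v = f (g v) from fun _ _ _ => rfl, ih]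
      by_cases he : Even n
      · rw [if_pos he, hact_t, InfDihAux.coefSeq_succ_even he]
      · rw [if_neg he, hact_s, InfDihAux.coefSeq_succ_odd he]
  have hli0 : ∀ x y : ℝ, x • α + y • b = 0 → x = 0 ∧ y = 0 := by
    intro x y hxy
    have e1 : x - c * y = 0 := by rw [← hBα x y, hxy, InfDihAux.bform_zero_right]
    have e2 : y - c * x = 0 := by rw [← hBβ x y, hxy, InfDihAux.bform_zero_right]
    by_cases hx : x = 0
    · exact ⟨hx, by rw [hx] at e2; linarith⟩
    · exfalso
      have h3 : (1 - c*c) * x = 0 := by linear_combination e1 + c * e2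
      have h4 : 1 - c*c = 0 := by
        rcases mul_eq_zero.1 h3 with h | h
        · exact h
        · exact absurd h hx
      have hc1 : c = 1 := by nlinarith
      have hxy' : x = y := by rw [hc1] at e1; linarith
      have h5 : α + b = 0 := by
        rw [← hxy'] at hxy
        have h6 : x • (α + b) = 0 := by
          rw [smul_add]
          exact hxy
        rcases smul_eq_zero.1 h6 with h | h
        · exact absurd h hx
        · exact h
      have h7 : b s = -1 := by
        have h8 := congrFun h5 s
        have h9 : α s = 1 := by rw [hα, simpleRoot, Pi.single_apply]; simp
        simp only [Pi.add_apply, Pi.zero_apply] at h8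
        linarith
      have h10 := InfDihAux.cone_simple_nonneg hb.1 s
      linarith
  have hli : ∀ x y x' y' : ℝ, x • α + y • b = x' • α + y' • b → x = x' ∧ y = y' := by
    intro x y x' y' h
    have h0 : (x - x') • α + (y - y') • b = 0 := by
      have h1 : (x - x') • α + (y - y') • b = (x • α + y • b) - (x' • α + y' • b) := by module
      rw [h1, h, sub_self]
    obtain ⟨u1, u2⟩ := hli0 _ _ h0
    constructor <;> linarith
  have hγinj : Function.Injective (fun n => ρ (InfDihAux.grpSeq (cs.simple s) t n) α) := by
    intro n m h
    simp only at h
    rw [hroot n, hroot m] at h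
    obtain ⟨e1, e2⟩ := hli _ _ _ _ h
    exact InfDihAux.coefSeq_injective hc (Prod.ext e1 e2)
  have hγmem : ∀ n, ρ (InfDihAux.grpSeq (cs.simple s) t n) α ∈ posRoots ρ ∩ coneOf {α, b} := by
    intro n
    obtain ⟨h1, h2, _⟩ := InfDihAux.coefSeq_invariant hc n
    refine ⟨⟨?_, ⟨_, s, rfl⟩⟩, ?_⟩
    · rw [hroot n]
      exact InfDihAux.coneOf_combo h1 h2 (InfDihAux.coneOf_mem ⟨s, rfl⟩) hb.1
    · rw [hroot n]
      exact InfDihAux.coneOf_pair h1 h2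
  have ht2 : t * t = 1 := by
    apply hfaith
    rw [map_mul, map_one]
    refine LinearEquiv.ext fun v => ?_
    show ρ t (ρ t v) = v
    rw [ht v, ht, InfDihAux.bform_sub_right, InfDihAux.bform_smul_right, hββ]
    module
  have ht1 : t ≠ 1 := by
    intro h
    have h2 : ρ t b = b := by rw [h, map_one]; rfl
    rw [ht b, hββ] at h2
    have h3 : (2 * (1:ℝ)) • b = 0 := sub_eq_self.mp h2
    rcases smul_eq_zero.1 h3 with h4 | h4
    · norm_num at h4
    · exact hb0 h4
  have hs2 : cs.simple s * cs.simple s = 1 := cs.simple_mul_simple_self s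
  have hord : ∀ k : ℕ, (cs.simple s * t) ^ k = 1 → k = 0 := by
    intro k hk
    have h2 : ρ (InfDihAux.grpSeq (cs.simple s) t (2 * k)) α
        = ρ (InfDihAux.grpSeq (cs.simple s) t 0) α := by
      rw [InfDihAux.grpSeq_two_mul, hk]
      rfl
    have := hγinj h2
    omega
  exact ⟨InfDihAux.infinite_dihedral_iso hs2 ht2 ht1 hord,
    Set.infinite_of_injective_forall_mem hγinj hγmem⟩
end
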